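/- If a quantum state ρ on a multipartite Hilbert space H_1 ⊗ ⋯ ⊗ H_n and local projectors generate joint probabilities satisfying the modified Hardy conditions, then ρ is supported on the orthogonal complement S^⊥ of the subspace S spanned by the product states associated with the zero-probability conditions, and conversely any state ρ supported on S^⊥ with ⟨φ_+|ρ|φ_+⟩ ≠ 0 (where |φ_+⟩ = |u_1=1⟩⋯|u_n=1⟩) satisfies all the modified Hardy conditions. -/

import Mathlib

/-! A positive operator `ρ` with `re ⟪ψ, ρ ψ⟫ = 0` annihilates `ψ`, since `ρ = √ρ √ρ` and
`⟪ψ, ρ ψ⟫ = ‖√ρ ψ‖²`. Each Hardy condition is a sum of such nonnegative expectation values, so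
`ρ` annihilates `|v_1 = d_1⟩⋯|v_n = d_n⟩` and every mixed basis state with `v_r ≠ d_r`,
`u_{r+1} = 1`. A spanning vector of `S` fixing `v_r = k` and `u_{r+1} = 1` is, by multilinearity
of the product state, a combination of mixed basis states with these two outcomes (expand the
other factors in the bases `v_i`), hence is annihilated as well. Conversely, the states entering
the Hardy conditions are among the spanning vectors of `S`. -/

/-- The product state `⊗ᵢ f i` of an `n`-partite system with local dimensions `d i`,
as an element of `H_1 ⊗ ⋯ ⊗ H_n` modeled by `EuclideanSpace ℂ ((i : Fin n) → Fin (d i))`. -/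
noncomputable def prodG {n : ℕ} {d : Fin n → ℕ}
    (f : (i : Fin n) → EuclideanSpace ℂ (Fin (d i))) :
    EuclideanSpace ℂ ((i : Fin n) → Fin (d i)) :=
  (WithLp.equiv 2 _).symm (fun x => ∏ i, f i (x i))

open Function Set Submodule

theorem ContinuousLinearMap.IsPositive.apply_eq_zero_of_re_inner_eq_zero {H : Type*}
    [NormedAddCommGroup H] [InnerProductSpace ℂ H] [CompleteSpace H] {T : H →L[ℂ] H}
    (hT : T.IsPositive) {x : H} (hx : (inner ℂ x (T x) : ℂ).re = 0) : T x = 0 := by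
  set s := CFC.sqrt T
  have hs : IsSelfAdjoint s := .of_nonneg (CFC.sqrt_nonneg T)
  have hss : s * s = T := CFC.sqrt_mul_sqrt_self T ((T.nonneg_iff_isPositive).2 hT)
  have hsx : s x = 0 := by
    rw [← inner_self_eq_zero (𝕜 := ℂ), ← inner_self_ofReal_re, ← hs.adjoint_eq,
      ContinuousLinearMap.adjoint_inner_right, hs.adjoint_eq, ← mul_apply_eq_comp, hss]
    simp [inner_re_symm (T x), hx]
  rw [← hss, mul_apply_eq_comp, hsx, map_zero]

theorem ContinuousLinearMap.IsPositive.apply_eq_zero_of_sum_ite_re_inner_eq_zero {H ι : Type*}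
    [NormedAddCommGroup H] [InnerProductSpace ℂ H] [CompleteSpace H] [Fintype ι] {T : H →L[ℂ] H}
    (hT : T.IsPositive) {p : ι → Prop} [DecidablePred p] {ψ : ι → H}
    (h : ∑ j, (if p j then (inner ℂ (ψ j) (T (ψ j)) : ℂ).re else 0) = 0) {i : ι} (hi : p i) :
    T (ψ i) = 0 := by
  refine hT.apply_eq_zero_of_re_inner_eq_zero ?_
  have hterm := (Finset.sum_eq_zero_iff_of_nonneg fun j _ => ?_).1 h i (Finset.mem_univ i)
  · simpa [hi] using hterm
  · split_ifs
    exacts [hT.re_inner_nonneg_right _, le_rfl]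

section ProductStates

variable {n : ℕ} {d : Fin n → ℕ}

lemma prodG_sum_smul {ι : Fin n → Type*} [∀ i, Fintype (ι i)] (c : ∀ i, ι i → ℂ)
    (e : ∀ i, ι i → EuclideanSpace ℂ (Fin (d i))) :
    prodG (fun i => ∑ k, c i k • e i k) =
      ∑ x : ∀ i, ι i, (∏ i, c i (x i)) • prodG (fun i => e i (x i)) := by
  ext y
  simp only [prodG, WithLp.equiv_symm_apply, WithLp.ofLp_sum, WithLp.ofLp_smul,
    Finset.sum_apply, Pi.smul_apply, smul_eq_mul, ← Finset.prod_mul_distrib]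
  exact Fintype.prod_sum (fun i k => c i k * e i k (y i))

lemma prodG_mem_span_image_pi {ι : Fin n → Type*} [∀ i, Fintype (ι i)]
    (e : ∀ i, ι i → EuclideanSpace ℂ (Fin (d i))) (T : ∀ i, Set (ι i))
    {f : (i : Fin n) → EuclideanSpace ℂ (Fin (d i))} (hf : ∀ i, f i ∈ span ℂ (e i '' T i)) :
    prodG f ∈ span ℂ ((fun x => prodG fun i => e i (x i)) '' univ.pi T) := by
  choose l hlT hl using fun i => (Finsupp.mem_span_image_iff_linearCombination ℂ).1 (hf i)
  have hf_sum : f = fun i => ∑ k, l i k • e i k := by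
    funext i; rw [← hl i, Finsupp.linearCombination_apply, Finsupp.sum_fintype _ _ (by simp)]
  rw [hf_sum, prodG_sum_smul]
  refine sum_mem fun x _ => ?_
  by_cases hx : x ∈ univ.pi T
  · exact smul_mem _ _ (subset_span (mem_image_of_mem _ hx))
  · obtain ⟨i, -, hi⟩ := not_forall₂.1 hx
    rw [Finset.prod_eq_zero (Finset.mem_univ i) ((Finsupp.mem_supported' ℂ _).1 (hlT i) _ hi),
      zero_smul]
    exact zero_mem _

lemma prodG_update_update_mem_span (u v : ∀ i, Fin (d i) → EuclideanSpace ℂ (Fin (d i)))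
    (hv : ∀ i, span ℂ (range (v i)) = ⊤) {r s : Fin n} (hsr : s ≠ r) (k : Fin (d r))
    (l : Fin (d s)) (G : ∀ i, EuclideanSpace ℂ (Fin (d i))) :
    prodG (update (update G r (v r k)) s (u s l)) ∈
      span ℂ ((fun x : ∀ i, Fin (d i) => prodG (update (fun i => v i (x i)) s (u s (x s)))) ''
        {x | x r = k ∧ x s = l}) := by
  have hmem := prodG_mem_span_image_pi (update v s (u s))
    (update (update (fun _ => univ) r {k}) s {l})
    (f := update (update G r (v r k)) s (u s l)) fun i => by
      rcases eq_or_ne i s with rfl | his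
      · simp [mem_span_singleton_self]
      rcases eq_or_ne i r with rfl | hir
      · simp [update_of_ne his, mem_span_singleton_self]
      · simp [update_of_ne his, update_of_ne hir, hv i]
  refine span_mono ?_ hmem
  rintro _ ⟨x, hx, rfl⟩
  refine ⟨x, ⟨by simpa [update_of_ne hsr.symm] using hx r trivial, by simpa using hx s trivial⟩,
    congrArg prodG (funext fun i => ?_)⟩
  exact (apply_update (fun j (w : Fin (d j) → EuclideanSpace ℂ (Fin (d j))) => w (x j)) v s
    (u s) i).symm

end ProductStates

lemma Fin.ne_of_val_eq_add_one_mod {n : ℕ} (hn : 2 ≤ n) {r s : Fin n}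
    (hs : s.1 = (r.1 + 1) % n) : s ≠ r := by
  rintro rfl
  rcases Nat.lt_or_ge (s.1 + 1) n with h | h
  · rw [Nat.mod_eq_of_lt h] at hs; omega
  · rw [show s.1 + 1 = n by omega, Nat.mod_self] at hs; omega

theorem statement17_general (n : ℕ) (hn : 2 ≤ n) (d : Fin n → ℕ) (hd : ∀ i, 1 ≤ d i)
    (u v : (i : Fin n) → Fin (d i) → EuclideanSpace ℂ (Fin (d i)))
    (hv : ∀ i, Orthonormal ℂ (v i))
    (next : Fin n → Fin n) (hnext : ∀ r : Fin n, (next r).1 = (r.1 + 1) % n)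
    -- mixed product basis used to compute the marginals of the second condition:
    (Φ : (r : Fin n) → ((i : Fin n) → Fin (d i)) → EuclideanSpace ℂ ((i : Fin n) → Fin (d i)))
    (hΦ : ∀ r x, Φ r x =
      prodG (Function.update (fun i => v i (x i)) (next r) (u (next r) (x (next r)))))
    -- the subspace `S` spanned by the product states of the zero-probability conditions:
    (S : Submodule ℂ (EuclideanSpace ℂ ((i : Fin n) → Fin (d i))))
    (hS : S = Submodule.span ℂ
      (insert (prodG (fun i => v i ⟨d i - 1, Nat.sub_lt (hd i) Nat.one_pos⟩))
        {ψ | ∃ (r : Fin n) (k : Fin (d r)) (g : (i : Fin n) → Fin (d i) × Bool),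
          k ≠ ⟨d r - 1, Nat.sub_lt (hd r) Nat.one_pos⟩ ∧
          ψ = prodG (Function.update
            (Function.update
              (fun i => if (g i).2 then v i (g i).1 else u i (g i).1) r (v r k))
            (next r) (u (next r) ⟨0, hd (next r)⟩))})) :
    (∀ ρ : EuclideanSpace ℂ ((i : Fin n) → Fin (d i)) →L[ℂ]
        EuclideanSpace ℂ ((i : Fin n) → Fin (d i)),
      ρ.IsPositive →
      LinearMap.trace ℂ _ (ρ : EuclideanSpace ℂ ((i : Fin n) → Fin (d i)) →ₗ[ℂ]
        EuclideanSpace ℂ ((i : Fin n) → Fin (d i))) = 1 →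
      -- the zero conditions:
      (∀ r : Fin n, ∑ x : (i : Fin n) → Fin (d i),
        (if x r ≠ ⟨d r - 1, Nat.sub_lt (hd r) Nat.one_pos⟩ ∧ x (next r) = ⟨0, hd (next r)⟩
          then (inner ℂ (Φ r x) (ρ (Φ r x)) : ℂ).re else 0) = 0) →
      (inner ℂ (prodG (fun i => v i ⟨d i - 1, Nat.sub_lt (hd i) Nat.one_pos⟩))
        (ρ (prodG (fun i => v i ⟨d i - 1, Nat.sub_lt (hd i) Nat.one_pos⟩))) : ℂ).re = 0 →
      ∀ φ ∈ S, ρ φ = 0) ∧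
    (∀ ρ : EuclideanSpace ℂ ((i : Fin n) → Fin (d i)) →L[ℂ]
        EuclideanSpace ℂ ((i : Fin n) → Fin (d i)),
      ρ.IsPositive →
      LinearMap.trace ℂ _ (ρ : EuclideanSpace ℂ ((i : Fin n) → Fin (d i)) →ₗ[ℂ]
        EuclideanSpace ℂ ((i : Fin n) → Fin (d i))) = 1 →
      (∀ φ ∈ S, ρ φ = 0) →
      (inner ℂ (prodG (fun i => u i ⟨0, hd i⟩)) (ρ (prodG (fun i => u i ⟨0, hd i⟩))) : ℂ).re ≠ 0 →
      (∀ r : Fin n, ∑ x : (i : Fin n) → Fin (d i),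
        (if x r ≠ ⟨d r - 1, Nat.sub_lt (hd r) Nat.one_pos⟩ ∧ x (next r) = ⟨0, hd (next r)⟩
          then (inner ℂ (Φ r x) (ρ (Φ r x)) : ℂ).re else 0) = 0) ∧
      (inner ℂ (prodG (fun i => v i ⟨d i - 1, Nat.sub_lt (hd i) Nat.one_pos⟩))
        (ρ (prodG (fun i => v i ⟨d i - 1, Nat.sub_lt (hd i) Nat.one_pos⟩))) : ℂ).re = 0 ∧
      0 < (inner ℂ (prodG (fun i => u i ⟨0, hd i⟩))
        (ρ (prodG (fun i => u i ⟨0, hd i⟩))) : ℂ).re) := by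
  have hnext_ne : ∀ r, next r ≠ r := fun r => Fin.ne_of_val_eq_add_one_mod hn (hnext r)
  have hv_span : ∀ i, span ℂ (range (v i)) = ⊤ := fun i =>
    (hv i).linearIndependent.span_eq_top_of_card_eq_finrank' (by simp)
  refine ⟨fun ρ hρ _ hzero hlast φ hφ => ?_, fun ρ hρ _ hρS hplus => ?_⟩
  · rw [hS] at hφ
    refine span_le (p := LinearMap.ker ρ.toLinearMap).2 ?_ hφ
    rintro _ (rfl | ⟨r, k, g, hk, rfl⟩)
    · exact hρ.apply_eq_zero_of_re_inner_eq_zero hlast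
    · refine span_le.2 ?_ (prodG_update_update_mem_span u v hv_span (hnext_ne r) k _ _)
      rintro _ ⟨x, ⟨rfl, hx⟩, rfl⟩
      simpa [hΦ] using hρ.apply_eq_zero_of_sum_ite_re_inner_eq_zero (hzero r) ⟨hk, hx⟩
  · have hΦS : ∀ r x, x r ≠ ⟨d r - 1, Nat.sub_lt (hd r) Nat.one_pos⟩ →
        x (next r) = ⟨0, hd (next r)⟩ → Φ r x ∈ S := fun r x hxr hxs => by
      rw [hS, hΦ]
      refine subset_span (Or.inr ⟨r, x r, fun i => (x i, true), hxr, ?_⟩)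
      simp [← hxs]
    have hlastS : prodG (fun i => v i ⟨d i - 1, Nat.sub_lt (hd i) Nat.one_pos⟩) ∈ S :=
      hS ▸ subset_span (mem_insert _ _)
    refine ⟨fun r => Finset.sum_eq_zero fun x _ => ?_, by simp [hρS _ hlastS],
      (hρ.re_inner_nonneg_right _).lt_of_ne' hplus⟩
    split_ifs with hx
    · simp [hρS _ (hΦS r x hx.1 hx.2)]
    · rfl

/-- If a quantum state `ρ` on `H_1 ⊗ ⋯ ⊗ H_n` and local projective
measurements (onto the orthonormal eigenbases `u i`, `v i`) give joint probabilities
satisfying the modified Hardy zero conditions `P(v_r ≠ d_r, u_{r+1} = 1) = 0` (cyclically)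
and `P(∀ i : v_i = d_i) = 0` (Born rule, marginals computed by summing over a product
basis of the other parties), then `ρ` is supported on the orthogonal complement of the
subspace `S` spanned by the product states associated with the zero-probability
conditions (i.e. `ρ` annihilates `S`); and conversely, any density operator `ρ`
annihilating `S` with `⟨φ_+|ρ|φ_+⟩ ≠ 0` (`|φ_+⟩ = |u_1=1⟩⋯|u_n=1⟩`) satisfies all the
modified Hardy conditions, with `P(∀ i : u_i = 1) = ⟨φ_+|ρ|φ_+⟩ > 0`.
(Outcome "1" of party `i` is `⟨0, _⟩ : Fin (d i)`, outcome "d_i" is `⟨d i - 1, _⟩`.) -/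
theorem statement17 (n : ℕ) (hn : 2 ≤ n) (d : Fin n → ℕ) (hd : ∀ i, 1 ≤ d i)
    (u v : (i : Fin n) → Fin (d i) → EuclideanSpace ℂ (Fin (d i)))
    (hu : ∀ i, Orthonormal ℂ (u i)) (hv : ∀ i, Orthonormal ℂ (v i))
    (next : Fin n → Fin n) (hnext : ∀ r : Fin n, (next r).1 = (r.1 + 1) % n)
    -- mixed product basis used to compute the marginals of the second condition:
    (Φ : (r : Fin n) → ((i : Fin n) → Fin (d i)) → EuclideanSpace ℂ ((i : Fin n) → Fin (d i)))
    (hΦ : ∀ r x, Φ r x =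
      prodG (Function.update (fun i => v i (x i)) (next r) (u (next r) (x (next r)))))
    -- the subspace `S` spanned by the product states of the zero-probability conditions:
    (S : Submodule ℂ (EuclideanSpace ℂ ((i : Fin n) → Fin (d i))))
    (hS : S = Submodule.span ℂ
      (insert (prodG (fun i => v i ⟨d i - 1, Nat.sub_lt (hd i) Nat.one_pos⟩))
        {ψ | ∃ (r : Fin n) (k : Fin (d r)) (g : (i : Fin n) → Fin (d i) × Bool),
          k ≠ ⟨d r - 1, Nat.sub_lt (hd r) Nat.one_pos⟩ ∧
          ψ = prodG (Function.update
            (Function.update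
              (fun i => if (g i).2 then v i (g i).1 else u i (g i).1) r (v r k))
            (next r) (u (next r) ⟨0, hd (next r)⟩))})) :
    (∀ ρ : EuclideanSpace ℂ ((i : Fin n) → Fin (d i)) →L[ℂ]
        EuclideanSpace ℂ ((i : Fin n) → Fin (d i)),
      ρ.IsPositive →
      LinearMap.trace ℂ _ (ρ : EuclideanSpace ℂ ((i : Fin n) → Fin (d i)) →ₗ[ℂ]
        EuclideanSpace ℂ ((i : Fin n) → Fin (d i))) = 1 →
      -- the zero conditions:
      (∀ r : Fin n, ∑ x : (i : Fin n) → Fin (d i),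
        (if x r ≠ ⟨d r - 1, Nat.sub_lt (hd r) Nat.one_pos⟩ ∧ x (next r) = ⟨0, hd (next r)⟩
          then (inner ℂ (Φ r x) (ρ (Φ r x)) : ℂ).re else 0) = 0) →
      (inner ℂ (prodG (fun i => v i ⟨d i - 1, Nat.sub_lt (hd i) Nat.one_pos⟩))
        (ρ (prodG (fun i => v i ⟨d i - 1, Nat.sub_lt (hd i) Nat.one_pos⟩))) : ℂ).re = 0 →
      ∀ φ ∈ S, ρ φ = 0) ∧
    (∀ ρ : EuclideanSpace ℂ ((i : Fin n) → Fin (d i)) →L[ℂ]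
        EuclideanSpace ℂ ((i : Fin n) → Fin (d i)),
      ρ.IsPositive →
      LinearMap.trace ℂ _ (ρ : EuclideanSpace ℂ ((i : Fin n) → Fin (d i)) →ₗ[ℂ]
        EuclideanSpace ℂ ((i : Fin n) → Fin (d i))) = 1 →
      (∀ φ ∈ S, ρ φ = 0) →
      (inner ℂ (prodG (fun i => u i ⟨0, hd i⟩)) (ρ (prodG (fun i => u i ⟨0, hd i⟩))) : ℂ).re ≠ 0 →
      (∀ r : Fin n, ∑ x : (i : Fin n) → Fin (d i),
        (if x r ≠ ⟨d r - 1, Nat.sub_lt (hd r) Nat.one_pos⟩ ∧ x (next r) = ⟨0, hd (next r)⟩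
          then (inner ℂ (Φ r x) (ρ (Φ r x)) : ℂ).re else 0) = 0) ∧
      (inner ℂ (prodG (fun i => v i ⟨d i - 1, Nat.sub_lt (hd i) Nat.one_pos⟩))
        (ρ (prodG (fun i => v i ⟨d i - 1, Nat.sub_lt (hd i) Nat.one_pos⟩))) : ℂ).re = 0 ∧
      0 < (inner ℂ (prodG (fun i => u i ⟨0, hd i⟩))
        (ρ (prodG (fun i => u i ⟨0, hd i⟩))) : ℂ).re) :=
  statement17_general n hn d hd u v hv next hnext Φ hΦ S hS
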